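/- Let n ≥ 2, let W ∈ ℝ^{n×n×n×n} be a symmetric fourth-order tensor, and let δ₀ ∈ ℝ. Define T(θ)_{abcd} := Σ_{p,q,r,s} W_{pqrs} G_{pa} G_{qb} G_{rc} G_{sd} with G = G(1,2,θ), h(θ) := Σ_{j=1}^n T(θ)_{jjjj}², and τ̃(x) := h(arctan x) − 2 δ₀ x² / (1 + x²)². Set a := 8(W_{1111}W_{1112} − W_{1222}W_{2222}); b := 8(W_{1111}² − 3W_{1122}W_{1111} − 4W_{1112}² − 4W_{1222}² + W_{2222}² − 3W_{1122}W_{2222}) + 4δ₀; c := 8(18W_{1112}W_{1122} − 7W_{1111}W_{1112} + 3W_{1111}W_{1222} − 18W_{1122}W_{1222} − 3W_{1112}W_{2222} + 7W_{1222}W_{2222}); d := 8(9W_{1111}W_{1122} − 32W_{1112}W_{1222} − 2W_{1111}W_{2222} + 9W_{1122}W_{2222} + 12W_{1112}² − 36W_{1122}² + 12W_{1222}²) + 4δ₀; e := 80(6W_{1122}W_{1222} − W_{1111}W_{1222} − 6W_{1112}W_{1122} + W_{1112}W_{2222}). Then for all x ∈ ℝ: (1 + x²)⁵ · τ̃'(x)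 = a(x⁸ + 1) + b(x⁷ − x) + c(x⁶ + x²) + d(x⁵ − x³) + e x⁴; moreover, for all x ≠ 0, this quantity equals x⁴ (a ξ⁴ + b ξ³ + (4a + c) ξ² + (3b + d) ξ + 2a + 2c + e) where ξ = x − 1/x. -/

import Mathlib

open Matrix Real Filter Set

attribute [local instance] Matrix.frobeniusNormedAddCommGroup Matrix.frobeniusNormedSpace

noncomputable def frobInner {n : ℕ} (A B : Matrix (Fin n) (Fin n) ℝ) : ℝ :=
  ∑ i, ∑ j, A i j * B i j

noncomputable def frobNorm {n : ℕ} (A : Matrix (Fin n) (Fin n) ℝ) : ℝ :=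
  Real.sqrt (∑ i, ∑ j, (A i j) ^ 2)

def SOn (n : ℕ) : Set (Matrix (Fin n) (Fin n) ℝ) := {Q | Qᵀ * Q = 1 ∧ Q.det = 1}

noncomputable def grad {n : ℕ} (f : Matrix (Fin n) (Fin n) ℝ → ℝ)
    (Q : Matrix (Fin n) (Fin n) ℝ) : Matrix (Fin n) (Fin n) ℝ :=
  Matrix.of fun k l => fderiv ℝ f Q (Matrix.single k l 1)

noncomputable def Lam {n : ℕ} (f : Matrix (Fin n) (Fin n) ℝ → ℝ)
    (Q : Matrix (Fin n) (Fin n) ℝ) : Matrix (Fin n) (Fin n) ℝ :=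
  (1 / 2 : ℝ) • (Qᵀ * grad f Q - (grad f Q)ᵀ * Q)

noncomputable def projGrad {n : ℕ} (f : Matrix (Fin n) (Fin n) ℝ → ℝ)
    (Q : Matrix (Fin n) (Fin n) ℝ) : Matrix (Fin n) (Fin n) ℝ := Q * Lam f Q

noncomputable def givens {n : ℕ} (i j : Fin n) (θ : ℝ) : Matrix (Fin n) (Fin n) ℝ :=
  Matrix.of fun k l =>
    if k = i ∧ l = i then Real.cos θ
    else if k = j ∧ l = j then Real.cos θ
    else if k = j ∧ l = i then Real.sin θ
    else if k = i ∧ l = j then -Real.sin θ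
    else if k = l then 1 else 0

def deltaMat {n : ℕ} (i j : Fin n) : Matrix (Fin n) (Fin n) ℝ :=
  Matrix.of fun k l => if k = j ∧ l = i then 1 else if k = i ∧ l = j then -1 else 0


/-!
Only columns `i` and `j` of `G = givens i j θ` differ from those of the identity, and on a vector
supported on `{i, j}` the quartic form of a symmetric `W` is the binary quartic `B` with
coefficients `W iiii, W iiij, W iijj, W ijjj, W jjjj`. Hence
`h θ = B (cos θ) (sin θ) ^ 2 + B (-sin θ) (cos θ) ^ 2 + const`, and since `B` is homogeneous of
degree 4, the substitution `θ = arctan x` makes `τ̃` a polynomial divided by `(1 + x²) ^ 4`, whose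
derivative is the stated octic over `(1 + x²) ^ 5`. The octic is palindromic in `a, c, e` and
antipalindromic in `b, d`, so dividing by `x ^ 4` leaves a quartic in `ξ = x - 1/x`.
-/

section QuarticForm

variable {ι R : Type*} [Fintype ι] [CommRing R]

def quarticForm (W : ι → ι → ι → ι → R) (v : ι → R) : R :=
  ∑ p, ∑ q, ∑ r, ∑ s, W p q r s * v p * v q * v r * v s

def binaryQuartic (w₀ w₁ w₂ w₃ w₄ x y : R) : R :=
  w₀ * x ^ 4 + 4 * w₁ * x ^ 3 * y + 6 * w₂ * x ^ 2 * y ^ 2 + 4 * w₃ * x * y ^ 3 + w₄ * y ^ 4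

theorem quarticForm_pi_single [DecidableEq ι] (W : ι → ι → ι → ι → R) (t : ι) :
    quarticForm W (Pi.single t 1) = W t t t t := by
  simp [quarticForm, Pi.single_apply]

theorem quarticForm_eq_binaryQuartic {W : ι → ι → ι → ι → R}
    (hsym1 : ∀ p q r s, W p q r s = W q p r s) (hsym2 : ∀ p q r s, W p q r s = W p r q s)
    (hsym3 : ∀ p q r s, W p q r s = W p q s r) {i j : ι} (hij : i ≠ j) {v : ι → R}
    (hv : ∀ p, p ≠ i ∧ p ≠ j → v p = 0) :
    quarticForm W v = binaryQuartic (W i i i i) (W i i i j) (W i i j j) (W i j j j) (W j j j j)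
      (v i) (v j) := by
  have h₁ : W i i j i = W i i i j ∧ W i j i i = W i i i j ∧ W j i i i = W i i i j := by grind
  have h₂ : W i j i j = W i i j j ∧ W i j j i = W i i j j ∧ W j i i j = W i i j j ∧
      W j i j i = W i i j j ∧ W j j i i = W i i j j := by grind
  have h₃ : W j i j j = W i j j j ∧ W j j i j = W i j j j ∧ W j j j i = W i j j j := by grind
  simp (disch := intro p hp; simp [hv p hp]) only [quarticForm, Fintype.sum_eq_add i j hij]
  simp only [h₁, h₂, h₃, binaryQuartic]
  ring

end QuarticForm

section Arctan

variable (w₀ w₁ w₂ w₃ w₄ : ℝ)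

theorem binaryQuartic_div (x y r : ℝ) :
    binaryQuartic w₀ w₁ w₂ w₃ w₄ (x / r) (y / r) = binaryQuartic w₀ w₁ w₂ w₃ w₄ x y / r ^ 4 := by
  simp only [binaryQuartic, div_eq_mul_inv]
  ring

theorem sqrt_one_add_sq_pow_four (x : ℝ) : √(1 + x ^ 2) ^ 4 = (1 + x ^ 2) ^ 2 := by
  rw [show 4 = 2 * 2 from rfl, pow_mul, sq_sqrt (by positivity)]

theorem binaryQuartic_cos_arctan_sin_arctan (x : ℝ) :
    binaryQuartic w₀ w₁ w₂ w₃ w₄ (cos (arctan x)) (sin (arctan x)) =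
      binaryQuartic w₀ w₁ w₂ w₃ w₄ 1 x / (1 + x ^ 2) ^ 2 := by
  rw [cos_arctan, sin_arctan, binaryQuartic_div, sqrt_one_add_sq_pow_four]

theorem binaryQuartic_neg_sin_arctan_cos_arctan (x : ℝ) :
    binaryQuartic w₀ w₁ w₂ w₃ w₄ (-sin (arctan x)) (cos (arctan x)) =
      binaryQuartic w₀ w₁ w₂ w₃ w₄ (-x) 1 / (1 + x ^ 2) ^ 2 := by
  rw [cos_arctan, sin_arctan, ← neg_div, binaryQuartic_div, sqrt_one_add_sq_pow_four]

end Arctan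

theorem hasDerivAt_binaryQuartic (w₀ w₁ w₂ w₃ w₄ : ℝ) {f g : ℝ → ℝ} {f' g' x : ℝ}
    (hf : HasDerivAt f f' x) (hg : HasDerivAt g g' x) :
    HasDerivAt (fun t => binaryQuartic w₀ w₁ w₂ w₃ w₄ (f t) (g t))
      (f' * (4 * w₀ * f x ^ 3 + 12 * w₁ * f x ^ 2 * g x + 12 * w₂ * f x * g x ^ 2
          + 4 * w₃ * g x ^ 3)
        + g' * (4 * w₁ * f x ^ 3 + 12 * w₂ * f x ^ 2 * g x + 12 * w₃ * f x * g x ^ 2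
          + 4 * w₄ * g x ^ 3)) x := by
  have := (((((hf.fun_pow 4).const_mul w₀).fun_add
    (((hf.fun_pow 3).const_mul (4 * w₁)).fun_mul hg)).fun_add
    (((hf.fun_pow 2).const_mul (6 * w₂)).fun_mul (hg.fun_pow 2))).fun_add
    ((hf.const_mul (4 * w₃)).fun_mul (hg.fun_pow 3))).fun_add ((hg.fun_pow 4).const_mul w₄)
  unfold binaryQuartic
  refine this.congr_deriv ?_
  push_cast
  ring

theorem hasDerivAt_div_one_add_sq_pow {N : ℝ → ℝ} {N' x : ℝ} (hN : HasDerivAt N N' x) (k : ℕ) :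
    HasDerivAt (fun t => N t / (1 + t ^ 2) ^ k)
      ((N' * (1 + x ^ 2) - 2 * k * x * N x) / (1 + x ^ 2) ^ (k + 1)) x := by
  have hD := ((hasDerivAt_pow 2 x).const_add 1).fun_pow k
  refine (hN.fun_div hD (by positivity)).congr_deriv ?_
  rcases k with _ | k
  · simp [mul_div_assoc, div_self (by positivity : (1 + x ^ 2 : ℝ) ≠ 0)]
  · push_cast
    field_simp
    ring

theorem sum_sq_quarticForm_givens {n : ℕ} {W : Fin n → Fin n → Fin n → Fin n → ℝ}
    (hsym1 : ∀ p q r s, W p q r s = W q p r s) (hsym2 : ∀ p q r s, W p q r s = W p r q s)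
    (hsym3 : ∀ p q r s, W p q r s = W p q s r) {i j : Fin n} (hij : i ≠ j) (θ : ℝ) :
    ∑ t, quarticForm W (fun p => givens i j θ p t) ^ 2 =
      binaryQuartic (W i i i i) (W i i i j) (W i i j j) (W i j j j) (W j j j j)
          (cos θ) (sin θ) ^ 2 +
        binaryQuartic (W i i i i) (W i i i j) (W i i j j) (W i j j j) (W j j j j)
          (-sin θ) (cos θ) ^ 2 +
        ∑ t ∈ {i, j}ᶜ, W t t t t ^ 2 := by
  rw [← Finset.sum_add_sum_compl {i, j}, Finset.sum_pair hij]
  congr 1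
  · have hvanish : ∀ t p, p ≠ i ∧ p ≠ j → (t = i ∨ t = j) → givens i j θ p t = 0 := by
      rintro t p ⟨hpi, hpj⟩ (rfl | rfl) <;> simp [givens, hpi, hpj]
    rw [quarticForm_eq_binaryQuartic hsym1 hsym2 hsym3 hij fun p hp => hvanish i p hp (.inl rfl),
      quarticForm_eq_binaryQuartic hsym1 hsym2 hsym3 hij fun p hp => hvanish j p hp (.inr rfl)]
    simp [givens, hij, hij.symm]
  · refine Finset.sum_congr rfl fun t ht => ?_
    have hcol : (fun p => givens i j θ p t) = Pi.single t 1 := by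
      simp only [Finset.mem_compl, Finset.mem_insert, Finset.mem_singleton, not_or] at ht
      ext p
      simp [givens, Pi.single_apply, ht.1, ht.2]
    rw [hcol, quarticForm_pi_single]

theorem one_add_sq_pow_five_mul_deriv {w₀ w₁ w₂ w₃ w₄ δ C a b c d e : ℝ} {τ : ℝ → ℝ}
    (hτ : ∀ x, τ x = (binaryQuartic w₀ w₁ w₂ w₃ w₄ 1 x / (1 + x ^ 2) ^ 2) ^ 2
      + (binaryQuartic w₀ w₁ w₂ w₃ w₄ (-x) 1 / (1 + x ^ 2) ^ 2) ^ 2 + C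
      - 2 * δ * x ^ 2 / (1 + x ^ 2) ^ 2)
    (ha : a = 8 * (w₀ * w₁ - w₃ * w₄))
    (hb : b = 8 * (w₀ ^ 2 - 3 * w₂ * w₀ - 4 * w₁ ^ 2 - 4 * w₃ ^ 2 + w₄ ^ 2 - 3 * w₂ * w₄) + 4 * δ)
    (hc : c = 8 * (18 * w₁ * w₂ - 7 * w₀ * w₁ + 3 * w₀ * w₃ - 18 * w₂ * w₃ - 3 * w₁ * w₄
      + 7 * w₃ * w₄))
    (hd : d = 8 * (9 * w₀ * w₂ - 32 * w₁ * w₃ - 2 * w₀ * w₄ + 9 * w₂ * w₄ + 12 * w₁ ^ 2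
      - 36 * w₂ ^ 2 + 12 * w₃ ^ 2) + 4 * δ)
    (he : e = 80 * (6 * w₂ * w₃ - w₀ * w₃ - 6 * w₁ * w₂ + w₁ * w₄)) (x : ℝ) :
    (1 + x ^ 2) ^ 5 * deriv τ x = a * (x ^ 8 + 1) + b * (x ^ 7 - x) + c * (x ^ 6 + x ^ 2)
      + d * (x ^ 5 - x ^ 3) + e * x ^ 4 := by
  have hP := hasDerivAt_binaryQuartic w₀ w₁ w₂ w₃ w₄ (hasDerivAt_const x 1) (hasDerivAt_id' x)
  have hQ := hasDerivAt_binaryQuartic w₀ w₁ w₂ w₃ w₄ (hasDerivAt_id' x).fun_neg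
    (hasDerivAt_const x 1)
  have hδ := ((hasDerivAt_pow 2 x).const_mul (2 * δ)).fun_mul
    (((hasDerivAt_pow 2 x).const_add 1).fun_pow 2)
  have hN := ((hP.fun_pow 2).fun_add (hQ.fun_pow 2)).fun_sub hδ
  have hτ' : τ = fun t => (binaryQuartic w₀ w₁ w₂ w₃ w₄ 1 t ^ 2
      + binaryQuartic w₀ w₁ w₂ w₃ w₄ (-t) 1 ^ 2 - 2 * δ * t ^ 2 * (1 + t ^ 2) ^ 2)
      / (1 + t ^ 2) ^ 4 + C := by
    ext t
    rw [hτ]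
    field_simp
    ring
  rw [hτ', ((hasDerivAt_div_one_add_sq_pow hN 4).add_const C).deriv, ha, hb, hc, hd, he]
  simp only [binaryQuartic]
  field_simp
  ring

theorem octic_eq_pow_four_mul_quartic_sub_inv (a b c d e : ℝ) {x : ℝ} (hx : x ≠ 0) :
    a * (x ^ 8 + 1) + b * (x ^ 7 - x) + c * (x ^ 6 + x ^ 2) + d * (x ^ 5 - x ^ 3) + e * x ^ 4 =
      x ^ 4 * (a * (x - 1 / x) ^ 4 + b * (x - 1 / x) ^ 3 + (4 * a + c) * (x - 1 / x) ^ 2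
        + (3 * b + d) * (x - 1 / x) + 2 * a + 2 * c + e) := by
  field_simp
  ring

theorem stmt_18_general {n : ℕ} (W : Fin n → Fin n → Fin n → Fin n → ℝ)
    (hsym1 : ∀ p q r s, W p q r s = W q p r s)
    (hsym2 : ∀ p q r s, W p q r s = W p r q s)
    (hsym3 : ∀ p q r s, W p q r s = W p q s r)
    (δ₀ : ℝ)
    (i j : Fin n) (hi : (i : ℕ) = 0) (hj : (j : ℕ) = 1)
    (h : ℝ → ℝ)
    (hh : ∀ θ, h θ = ∑ t, (∑ p, ∑ q, ∑ r, ∑ s, W p q r s *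
      givens i j θ p t * givens i j θ q t * givens i j θ r t * givens i j θ s t) ^ 2)
    (τ : ℝ → ℝ)
    (hτ : ∀ x, τ x = h (Real.arctan x) - 2 * δ₀ * x ^ 2 / (1 + x ^ 2) ^ 2)
    (a b c d e : ℝ)
    (ha : a = 8 * (W i i i i * W i i i j - W i j j j * W j j j j))
    (hb : b = 8 * ((W i i i i) ^ 2 - 3 * W i i j j * W i i i i - 4 * (W i i i j) ^ 2
      - 4 * (W i j j j) ^ 2 + (W j j j j) ^ 2 - 3 * W i i j j * W j j j j) + 4 * δ₀)
    (hc : c = 8 * (18 * W i i i j * W i i j j - 7 * W i i i i * W i i i j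
      + 3 * W i i i i * W i j j j - 18 * W i i j j * W i j j j
      - 3 * W i i i j * W j j j j + 7 * W i j j j * W j j j j))
    (hd : d = 8 * (9 * W i i i i * W i i j j - 32 * W i i i j * W i j j j
      - 2 * W i i i i * W j j j j + 9 * W i i j j * W j j j j
      + 12 * (W i i i j) ^ 2 - 36 * (W i i j j) ^ 2 + 12 * (W i j j j) ^ 2) + 4 * δ₀)
    (he : e = 80 * (6 * W i i j j * W i j j j - W i i i i * W i j j j
      - 6 * W i i i j * W i i j j + W i i i j * W j j j j)) :
    (∀ x : ℝ, (1 + x ^ 2) ^ 5 * deriv τ x =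
      a * (x ^ 8 + 1) + b * (x ^ 7 - x) + c * (x ^ 6 + x ^ 2) + d * (x ^ 5 - x ^ 3) + e * x ^ 4) ∧
    (∀ x : ℝ, x ≠ 0 →
      a * (x ^ 8 + 1) + b * (x ^ 7 - x) + c * (x ^ 6 + x ^ 2) + d * (x ^ 5 - x ^ 3) + e * x ^ 4 =
        x ^ 4 * (a * (x - 1 / x) ^ 4 + b * (x - 1 / x) ^ 3 + (4 * a + c) * (x - 1 / x) ^ 2
          + (3 * b + d) * (x - 1 / x) + 2 * a + 2 * c + e)) := by
  have hij : i ≠ j := fun hij => by simp [hij, hj] at hi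
  have hh' : ∀ θ, h θ = ∑ t, quarticForm W (fun p => givens i j θ p t) ^ 2 := hh
  have hτ' : ∀ x, τ x = _ := fun x => by
    rw [hτ, hh', sum_sq_quarticForm_givens hsym1 hsym2 hsym3 hij,
      binaryQuartic_cos_arctan_sin_arctan, binaryQuartic_neg_sin_arctan_cos_arctan]
  exact ⟨one_add_sq_pow_five_mul_deriv hτ' ha hb hc hd he,
    fun x hx => octic_eq_pow_four_mul_quartic_sub_inv a b c d e hx⟩

theorem stmt_18 {n : ℕ} (hn : 2 ≤ n) (W : Fin n → Fin n → Fin n → Fin n → ℝ)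
    (hsym1 : ∀ p q r s, W p q r s = W q p r s)
    (hsym2 : ∀ p q r s, W p q r s = W p r q s)
    (hsym3 : ∀ p q r s, W p q r s = W p q s r)
    (δ₀ : ℝ)
    (i j : Fin n) (hi : (i : ℕ) = 0) (hj : (j : ℕ) = 1)
    (h : ℝ → ℝ)
    (hh : ∀ θ, h θ = ∑ t, (∑ p, ∑ q, ∑ r, ∑ s, W p q r s *
      givens i j θ p t * givens i j θ q t * givens i j θ r t * givens i j θ s t) ^ 2)
    (τ : ℝ → ℝ)
    (hτ : ∀ x, τ x = h (Real.arctan x) - 2 * δ₀ * x ^ 2 / (1 + x ^ 2) ^ 2)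
    (a b c d e : ℝ)
    (ha : a = 8 * (W i i i i * W i i i j - W i j j j * W j j j j))
    (hb : b = 8 * ((W i i i i) ^ 2 - 3 * W i i j j * W i i i i - 4 * (W i i i j) ^ 2
      - 4 * (W i j j j) ^ 2 + (W j j j j) ^ 2 - 3 * W i i j j * W j j j j) + 4 * δ₀)
    (hc : c = 8 * (18 * W i i i j * W i i j j - 7 * W i i i i * W i i i j
      + 3 * W i i i i * W i j j j - 18 * W i i j j * W i j j j
      - 3 * W i i i j * W j j j j + 7 * W i j j j * W j j j j))
    (hd : d = 8 * (9 * W i i i i * W i i j j - 32 * W i i i j * W i j j j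
      - 2 * W i i i i * W j j j j + 9 * W i i j j * W j j j j
      + 12 * (W i i i j) ^ 2 - 36 * (W i i j j) ^ 2 + 12 * (W i j j j) ^ 2) + 4 * δ₀)
    (he : e = 80 * (6 * W i i j j * W i j j j - W i i i i * W i j j j
      - 6 * W i i i j * W i i j j + W i i i j * W j j j j)) :
    (∀ x : ℝ, (1 + x ^ 2) ^ 5 * deriv τ x =
      a * (x ^ 8 + 1) + b * (x ^ 7 - x) + c * (x ^ 6 + x ^ 2) + d * (x ^ 5 - x ^ 3) + e * x ^ 4) ∧
    (∀ x : ℝ, x ≠ 0 →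
      a * (x ^ 8 + 1) + b * (x ^ 7 - x) + c * (x ^ 6 + x ^ 2) + d * (x ^ 5 - x ^ 3) + e * x ^ 4 =
        x ^ 4 * (a * (x - 1 / x) ^ 4 + b * (x - 1 / x) ^ 3 + (4 * a + c) * (x - 1 / x) ^ 2
          + (3 * b + d) * (x - 1 / x) + 2 * a + 2 * c + e)) :=
  stmt_18_general W hsym1 hsym2 hsym3 δ₀ i j hi hj h hh τ hτ a b c d e ha hb hc hd he
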